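/- There is an absolute constant C such that for every finite connected undirected graph G = (V, E, w) on n vertices with nonnegative real edge weights and every integer k > 1, there exists a weighted graph H on vertex set V with at most C · (k·n + n^{1 + 1/(2^k − 1)}) edges such that d_H ≥ d_G and, for every 0 < ε < 1 and every path P in G from x to y, d_H(x, y) ≤ (1 + ε) · w(P) + β · W(P), where w(P) is the total weight of P, W(P) is the maximum edge weight on P, and β = (C·k/ε)^{k−1}. -/

import Mathlib

/-!
Thorup–Zwick style emulator for the metric `d = d_G`, with every edge weighted by `d`, so that
`d_H ≥ d_G`. Levels `V = A₀ ⊇ A₁ ⊇ ⋯ ⊇ A_K`, `K = k - 1`: each `u ∈ A_i` is joined to its `σ_i`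
nearest points of `A_i` (its ball) and to a center in `A_{i+1}`, the centers being chosen
greedily by increasing radius so that their balls are disjoint, meet the ball of `u`, and are not
larger; `A_K` is a clique. Disjointness gives `|A_{i+1}| σ_i ≤ |A_i|`, and with
`σ_i ≈ 2 n ^ (2 ^ i / (2 ^ k - 1))` level `i` has `O(2⁻ⁱ n ^ (1 + 1 / (2 ^ k - 1)))` edges.

For the stretch, follow the path level by level, keeping anchors that have climbed to the
current level. At level `l` the path is cut greedily into stretches of weight about `ρ ^ l W`.
Inside a stretch the level-`l` anchors are either joined by a ball edge, at an additive cost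
`O(ρ ^ l W)` that is charged to `ε / K` times the weight of the stretch, or they lie outside each
other's balls, which bounds their radii and lets them climb one level at cost `O(ρ ^ l W)`. At
level `K` the clique joins the anchors: `d_H(x, y) ≤ (1 + ε) w(P) + O(ρ ^ K) W(P)` with
`ρ = O(k / ε)`.
-/

open scoped ENNReal Classical

namespace ASP

variable {V : Type*}

/-- The total weight of a walk `p`, with edge weights given by `w`. -/
noncomputable def wWeight {G : SimpleGraph V} (w : V → V → ℝ≥0∞) {x y : V}
    (p : G.Walk x y) : ℝ≥0∞ :=
  (p.darts.map fun d => w d.toProd.1 d.toProd.2).sum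

/-- The shortest-path distance between `x` and `y` in the graph `G` with edge weights `w`. -/
noncomputable def gdist (G : SimpleGraph V) (w : V → V → ℝ≥0∞) (x y : V) : ℝ≥0∞ :=
  ⨅ p : G.Walk x y, wWeight w p

/-- The maximum edge weight on a walk `p` (zero for the empty walk). -/
noncomputable def maxW {G : SimpleGraph V} (w : V → V → ℝ≥0∞) {x y : V}
    (p : G.Walk x y) : ℝ≥0∞ :=
  (p.darts.map fun d => w d.toProd.1 d.toProd.2).foldr max 0

open Finset

structure IsPseudoEDist (δ : V → V → ℝ≥0∞) : Prop where
  self_eq_zero : ∀ x, δ x x = 0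
  comm : ∀ x y, δ x y = δ y x
  triangle : ∀ x y z, δ x z ≤ δ x y + δ y z

section Walks

variable {G : SimpleGraph V} {w : V → V → ℝ≥0∞} {x y z : V}

lemma wWeight_cons (h : G.Adj x y) (p : G.Walk y z) :
    wWeight w (.cons h p) = w x y + wWeight w p := by
  simp [wWeight]

lemma wWeight_append (p : G.Walk x y) (q : G.Walk y z) :
    wWeight w (p.append q) = wWeight w p + wWeight w q := by
  simp [wWeight, SimpleGraph.Walk.darts_append]

lemma wWeight_reverse (hsym : ∀ u v, G.Adj u v → w u v = w v u) (p : G.Walk x y) :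
    wWeight w p.reverse = wWeight w p := by
  rw [wWeight, SimpleGraph.Walk.darts_reverse, List.map_reverse, List.sum_reverse, List.map_map,
    wWeight]
  exact congrArg _ (List.map_congr_left fun d _ => (hsym _ _ d.adj).symm)

lemma wWeight_ne_top (hfin : ∀ u v, G.Adj u v → w u v ≠ ⊤) (p : G.Walk x y) :
    wWeight w p ≠ ⊤ := by
  induction p with
  | nil => simp [wWeight]
  | cons h p ih => simpa [wWeight_cons] using ⟨hfin _ _ h, ih⟩

lemma wWeight_eq_sum_getVert (p : G.Walk x y) :
    wWeight w p = ∑ t ∈ range p.length, w (p.getVert t) (p.getVert (t + 1)) := by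
  induction p with
  | nil => simp [wWeight]
  | cons h p ih =>
    rw [wWeight_cons, ih, SimpleGraph.Walk.length_cons, sum_range_succ', add_comm]
    simp [SimpleGraph.Walk.getVert_cons_succ]

lemma le_maxW (p : G.Walk x y) {t : ℕ} (ht : t < p.length) :
    w (p.getVert t) (p.getVert (t + 1)) ≤ maxW w p := by
  induction p generalizing t with
  | nil => simp at ht
  | cons h p ih =>
    have hcons : maxW w (.cons h p) = max (w _ _) (maxW w p) := rfl
    rw [hcons]
    cases t with
    | zero => simp
    | succ t =>
      simp only [SimpleGraph.Walk.getVert_cons_succ]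
      exact (ih (by simpa using ht)).trans (le_max_right _ _)

lemma maxW_ne_top (hfin : ∀ u v, G.Adj u v → w u v ≠ ⊤) (p : G.Walk x y) :
    maxW w p ≠ ⊤ := by
  induction p with
  | nil => simp [maxW]
  | cons h p ih =>
    have hcons : maxW w (.cons h p) = max (w _ _) (maxW w p) := rfl
    simpa [hcons] using ⟨hfin _ _ h, ih⟩

lemma gdist_le_wWeight (p : G.Walk x y) : gdist G w x y ≤ wWeight w p :=
  iInf_le _ p

lemma gdist_self : gdist G w x x = 0 :=
  le_antisymm (gdist_le_wWeight .nil) bot_le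

lemma gdist_le_of_adj (h : G.Adj x y) : gdist G w x y ≤ w x y := by
  simpa [wWeight_cons, wWeight] using gdist_le_wWeight (w := w) (.cons h .nil)

lemma gdist_ne_top (hconn : G.Connected) (hfin : ∀ u v, G.Adj u v → w u v ≠ ⊤) :
    gdist G w x y ≠ ⊤ :=
  ne_top_of_le_ne_top (wWeight_ne_top hfin (hconn.preconnected x y).some)
    (gdist_le_wWeight _)

lemma gdist_triangle : gdist G w x z ≤ gdist G w x y + gdist G w y z := by
  simp only [gdist, ENNReal.iInf_add, ENNReal.add_iInf]
  exact le_iInf₂ fun q p => (iInf_le _ (p.append q)).trans_eq (wWeight_append p q)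

lemma isPseudoEDist_gdist (hsym : ∀ u v, G.Adj u v → w u v = w v u) :
    IsPseudoEDist (gdist G w) where
  self_eq_zero _ := gdist_self
  comm x y := by
    have h : ∀ a b, gdist G w a b ≤ gdist G w b a := fun a b =>
      le_iInf fun p => (gdist_le_wWeight p.reverse).trans_eq (wWeight_reverse hsym p)
    exact le_antisymm (h x y) (h y x)
  triangle _ _ _ := gdist_triangle

lemma IsPseudoEDist.le_wWeight {δ : V → V → ℝ≥0∞} (hδ : IsPseudoEDist δ) (p : G.Walk x y) :
    δ x y ≤ wWeight δ p := by
  induction p with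
  | nil => simp [hδ.self_eq_zero]
  | cons h p ih => exact (hδ.triangle _ _ _).trans (by rw [wWeight_cons]; gcongr)

lemma IsPseudoEDist.le_gdist {δ : V → V → ℝ≥0∞} (hδ : IsPseudoEDist δ) :
    δ x y ≤ gdist G δ x y :=
  le_iInf hδ.le_wWeight

end Walks

section Greedy

variable {α β : Type*} [LinearOrder α]

theorem exists_subset_card_eq_min_forall_le (f : V → α) (A : Finset V) (s : ℕ) :
    ∃ B ⊆ A, #B = min s #A ∧ ∀ b ∈ B, ∀ v ∈ A \ B, f b ≤ f v := by
  induction s with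
  | zero => exact ⟨∅, empty_subset _, by simp, by simp⟩
  | succ s ih =>
    obtain ⟨B, hBA, hcard, hle⟩ := ih
    have hsplit := card_sdiff_add_card_eq_card hBA
    rcases (A \ B).eq_empty_or_nonempty with h | h
    · refine ⟨B, hBA, ?_, hle⟩
      rw [h, card_empty] at hsplit
      omega
    · obtain ⟨v₀, hv₀, hmin⟩ := (A \ B).exists_min_image f h
      have hv₀B := (mem_sdiff.1 hv₀).2
      refine ⟨insert v₀ B, insert_subset (mem_sdiff.1 hv₀).1 hBA, ?_, ?_⟩
      · have := h.card_pos
        rw [card_insert_of_notMem hv₀B]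
        omega
      · intro b hb v hv
        simp only [mem_sdiff, mem_insert, not_or] at hv
        rcases mem_insert.1 hb with rfl | hb
        · exact hmin v (mem_sdiff.2 ⟨hv.1, hv.2.2⟩)
        · exact hle b hb v (mem_sdiff.2 ⟨hv.1, hv.2.2⟩)

/-- The greedy (Vitali-type) selection: process the points in order of increasing `r`, keeping a
point whenever its ball misses the balls kept so far. -/
theorem exists_map_cover_pairwiseDisjoint (ball : V → Finset β) (r : V → α) (A : Finset V) :
    ∃ f : V → V, (∀ u ∈ A, f u ∈ A) ∧
      (∀ u ∈ A, (ball u).Nonempty → ¬ Disjoint (ball (f u)) (ball u) ∧ r (f u) ≤ r u) ∧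
      (A.image f : Set V).PairwiseDisjoint ball := by
  induction A using Finset.strongInduction with
  | H A ih =>
    by_cases hne : (A.filter fun u => (ball u).Nonempty).Nonempty
    · obtain ⟨u₀, hu₀, hmin⟩ := exists_min_image _ r hne
      rw [mem_filter] at hu₀
      obtain ⟨f, hfA, hcov, hdisj⟩ := ih (A.filter fun v => Disjoint (ball u₀) (ball v))
        (filter_ssubset.2 ⟨u₀, hu₀.1, by simpa [disjoint_self_iff_empty] using hu₀.2.ne_empty⟩)
      refine ⟨fun u => if Disjoint (ball u₀) (ball u) then f u else u₀, ?_, ?_, ?_⟩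
      · intro u hu
        dsimp only
        split_ifs with h
        · exact filter_subset _ _ (hfA u (mem_filter.2 ⟨hu, h⟩))
        · exact hu₀.1
      · intro u hu hball
        dsimp only
        split_ifs with h
        · exact hcov u (mem_filter.2 ⟨hu, h⟩) hball
        · exact ⟨h, hmin u (mem_filter.2 ⟨hu, hball⟩)⟩
      · refine (hdisj.insert (i := u₀) fun j hj _ => ?_).subset ?_
        · obtain ⟨v, hv, rfl⟩ := mem_image.1 (mem_coe.1 hj)
          exact (mem_filter.1 (hfA v hv)).2
        · intro x hx
          obtain ⟨u, hu, rfl⟩ := mem_image.1 (mem_coe.1 hx)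
          by_cases h : Disjoint (ball u₀) (ball u)
          · simp only [if_pos h]
            exact Set.mem_insert_of_mem _ (mem_coe.2 (mem_image_of_mem f (mem_filter.2 ⟨hu, h⟩)))
          · simp [if_neg h]
    · refine ⟨id, fun u hu => hu, fun u hu hb => absurd ⟨u, mem_filter.2 ⟨hu, hb⟩⟩ hne, ?_⟩
      intro x hx y _ _
      have hx : ¬ (ball x).Nonempty := fun hb => hne ⟨x, mem_filter.2 ⟨by simpa using hx, hb⟩⟩
      rw [Function.onFun, not_nonempty_iff_eq_empty.1 hx]
      exact disjoint_empty_left _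

end Greedy

section Levels

variable (d : V → V → ℝ≥0∞)

noncomputable def nearest (A : Finset V) (σ : ℕ) (u : V) : Finset V :=
  (exists_subset_card_eq_min_forall_le (d u) A σ).choose

noncomputable def nearRadius (A : Finset V) (σ : ℕ) (u : V) : ℝ≥0∞ :=
  (nearest d A σ u).sup (d u)

noncomputable def center (A : Finset V) (σ : ℕ) : V → V :=
  (exists_map_cover_pairwiseDisjoint (nearest d A σ) (nearRadius d A σ) A).choose

variable {d} {A : Finset V} {σ : ℕ} {u v : V}

lemma nearest_subset : nearest d A σ u ⊆ A :=
  (exists_subset_card_eq_min_forall_le (d u) A σ).choose_spec.1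

lemma card_nearest : #(nearest d A σ u) = min σ #A :=
  (exists_subset_card_eq_min_forall_le (d u) A σ).choose_spec.2.1

lemma nearRadius_le (hv : v ∈ A) (hv' : v ∉ nearest d A σ u) : nearRadius d A σ u ≤ d u v :=
  Finset.sup_le fun _ hb =>
    (exists_subset_card_eq_min_forall_le (d u) A σ).choose_spec.2.2 _ hb v (mem_sdiff.2 ⟨hv, hv'⟩)

lemma center_mem (hu : u ∈ A) : center d A σ u ∈ A :=
  (exists_map_cover_pairwiseDisjoint (nearest d A σ) (nearRadius d A σ) A).choose_spec.1 u hu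

lemma pairwiseDisjoint_nearest_center :
    (A.image (center d A σ) : Set V).PairwiseDisjoint (nearest d A σ) :=
  (exists_map_cover_pairwiseDisjoint (nearest d A σ) (nearRadius d A σ) A).choose_spec.2.2

/-- The balls of `u` and of its center meet, and the center's radius is not larger. -/
lemma dist_center_le (hd : IsPseudoEDist d) (hσ : 1 ≤ σ) (hu : u ∈ A) :
    d u (center d A σ u) ≤ 2 * nearRadius d A σ u := by
  have hne : (nearest d A σ u).Nonempty := by
    rw [← card_pos, card_nearest]
    exact lt_min hσ (card_pos.2 ⟨u, hu⟩)
  obtain ⟨hmeet, hrad⟩ := (exists_map_cover_pairwiseDisjoint (nearest d A σ) (nearRadius d A σ)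
    A).choose_spec.2.1 u hu hne
  obtain ⟨v, hvc, hvu⟩ := not_disjoint_iff.1 hmeet
  calc d u (center d A σ u) ≤ d u v + d v (center d A σ u) := hd.triangle _ _ _
    _ ≤ nearRadius d A σ u + nearRadius d A σ (center d A σ u) := by
      rw [hd.comm v]
      exact add_le_add (le_sup hvu) (le_sup hvc)
    _ ≤ 2 * nearRadius d A σ u := by rw [two_mul]; exact add_le_add_right hrad _

lemma card_image_center_mul_le : #(A.image (center d A σ)) * min σ #A ≤ #A := by
  calc #(A.image (center d A σ)) * min σ #A
      = ∑ c ∈ A.image (center d A σ), #(nearest d A σ c) := by simp [card_nearest]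
    _ = #((A.image (center d A σ)).biUnion (nearest d A σ)) :=
      (card_biUnion pairwiseDisjoint_nearest_center).symm
    _ ≤ #A := card_le_card (biUnion_subset.2 fun _ _ => nearest_subset)

end Levels

section Emulator

variable [Fintype V] (d : V → V → ℝ≥0∞) (σ : ℕ → ℕ)

noncomputable def level : ℕ → Finset V
  | 0 => univ
  | i + 1 => (level i).image (center d (level i) (σ i))

noncomputable def climb : ℕ → V → V
  | 0, x => x
  | l + 1, x => center d (level d σ l) (σ l) (climb l x)

noncomputable def climbCost : ℕ → V → ℝ≥0∞
  | 0, _ => 0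
  | l + 1, x => climbCost l x + 2 * nearRadius d (level d σ l) (σ l) (climb d σ l x)

noncomputable def emulatorEdges (K : ℕ) : Finset (Sym2 V) :=
  ((range K).biUnion fun i => (level d σ i).biUnion fun u =>
      insert s(u, center d (level d σ i) (σ i) u)
        ((nearest d (level d σ i) (σ i) u).image fun v => s(u, v))) ∪
    (level d σ K).sym2

noncomputable def emulator (K : ℕ) : SimpleGraph V :=
  SimpleGraph.fromEdgeSet (emulatorEdges d σ K)

variable {d σ} {K l : ℕ} {u v x : V}

lemma level_succ_subset (i : ℕ) : level d σ (i + 1) ⊆ level d σ i :=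
  image_subset_iff.2 fun _ hu => center_mem hu

lemma climb_mem_level (l : ℕ) (x : V) : climb d σ l x ∈ level d σ l := by
  induction l with
  | zero => exact mem_univ x
  | succ l ih => exact mem_image_of_mem _ ih

lemma dist_climb_le (hd : IsPseudoEDist d) (hσ : ∀ i, 1 ≤ σ i) (l : ℕ) (x : V) :
    d x (climb d σ l x) ≤ climbCost d σ l x := by
  induction l with
  | zero => simp [climb, climbCost, hd.self_eq_zero]
  | succ l ih =>
    exact (hd.triangle _ (climb d σ l x) _).trans
      (add_le_add ih (dist_center_le hd (hσ l) (climb_mem_level l x)))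

lemma center_edge_mem (hl : l < K) (hu : u ∈ level d σ l) :
    s(u, center d (level d σ l) (σ l) u) ∈ emulatorEdges d σ K :=
  mem_union_left _ (mem_biUnion.2 ⟨l, mem_range.2 hl, mem_biUnion.2 ⟨u, hu, mem_insert_self _ _⟩⟩)

lemma nearest_edge_mem (hl : l < K) (hu : u ∈ level d σ l)
    (hv : v ∈ nearest d (level d σ l) (σ l) u) : s(u, v) ∈ emulatorEdges d σ K :=
  mem_union_left _ (mem_biUnion.2 ⟨l, mem_range.2 hl,
    mem_biUnion.2 ⟨u, hu, mem_insert_of_mem (mem_image_of_mem _ hv)⟩⟩)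

lemma top_edge_mem (hu : u ∈ level d σ K) (hv : v ∈ level d σ K) :
    s(u, v) ∈ emulatorEdges d σ K :=
  mem_union_right _ (mk_mem_sym2_iff.2 ⟨hu, hv⟩)

lemma gdist_emulator_le_of_mem (h : s(u, v) ∈ emulatorEdges d σ K) :
    gdist (emulator d σ K) d u v ≤ d u v := by
  by_cases huv : u = v
  · subst huv
    exact gdist_self.trans_le bot_le
  · exact gdist_le_of_adj (SimpleGraph.fromEdgeSet_adj _ |>.2 ⟨h, huv⟩)

lemma gdist_climb_le (hd : IsPseudoEDist d) (hσ : ∀ i, 1 ≤ σ i) (hl : l ≤ K) (x : V) :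
    gdist (emulator d σ K) d x (climb d σ l x) ≤ climbCost d σ l x := by
  induction l with
  | zero => exact gdist_self.trans_le bot_le
  | succ l ih =>
    have hmem := climb_mem_level (d := d) (σ := σ) l x
    exact (gdist_triangle (y := climb d σ l x)).trans (add_le_add (ih (Nat.le_of_succ_le hl))
      ((gdist_emulator_le_of_mem (center_edge_mem hl hmem)).trans (dist_center_le hd (hσ l) hmem)))

end Emulator

section Stretch

/-- `κ l x` bounds the cost of climbing from `x` to its level-`l` representative: at every level
below `K` the representatives of `x` and `y` are either joined directly, or climbing one more
level from `x` is cheap; at level `K` they are always joined directly. -/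
structure IsClimbCost (d dH : V → V → ℝ≥0∞) (κ : ℕ → V → ℝ≥0∞) (K : ℕ) : Prop where
  zero : ∀ x, κ 0 x = 0
  jump_or_climb : ∀ l < K, ∀ x y, dH x y ≤ d x y + 2 * κ l x + 2 * κ l y ∨
    κ (l + 1) x ≤ 3 * κ l x + 2 * κ l y + 2 * d x y
  jump_top : ∀ x y, dH x y ≤ d x y + 2 * κ K x + 2 * κ K y

lemma IsClimbCost.jump_or_climb₂ {d dH : V → V → ℝ≥0∞} {κ : ℕ → V → ℝ≥0∞} {K l : ℕ}
    (hκ : IsClimbCost d dH κ K) (hd : IsPseudoEDist d) (hdH : IsPseudoEDist dH) (hl : l < K)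
    (x y : V) :
    dH x y ≤ d x y + 2 * κ l x + 2 * κ l y ∨
      κ (l + 1) x ≤ 3 * κ l x + 2 * κ l y + 2 * d x y ∧
      κ (l + 1) y ≤ 3 * κ l y + 2 * κ l x + 2 * d x y := by
  rcases hκ.jump_or_climb l hl x y with h | hx
  · exact .inl h
  rcases hκ.jump_or_climb l hl y x with h | hy
  · left
    rw [hdH.comm, hd.comm]
    exact h.trans_eq (by ring)
  · exact .inr ⟨hx, by rwa [hd.comm] at hy⟩

/-- In units of the largest edge weight, both the climbing cost of the anchors and the error of
the reached stretches at level `l` stay below `budget ρ l`: one more level of climbing costs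
`5 b + 2 ρ ^ l`, and appending a stretch reached with error `6 b` costs `b + 6 b`. -/
def budget (ρ : ℕ) : ℕ → ℕ
  | 0 => 0
  | l + 1 => 7 * budget ρ l + 2 * ρ ^ l

lemma budget_mono (ρ l : ℕ) : budget ρ l ≤ budget ρ (l + 1) := by
  simp only [budget]
  omega

lemma budget_succ_mul (ρ l : ℕ) (W : ℝ≥0∞) :
    (budget ρ (l + 1) : ℝ≥0∞) * W = 7 * (budget ρ l * W) + 2 * (ρ ^ l * W) := by
  simp only [budget]
  push_cast
  ring

lemma mul_le_of_add_le_mul {x η r s W : ℝ≥0∞} (h : x + η ≤ η * r) (hrs : r * W ≤ s + W)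
    (hη : η ≠ ⊤) (hW : W ≠ ⊤) : x * W ≤ η * s := by
  refine (ENNReal.add_le_add_iff_right (ENNReal.mul_ne_top hη hW)).1 ?_
  calc x * W + η * W = (x + η) * W := by ring
    _ ≤ η * r * W := by gcongr
    _ = η * (r * W) := by ring
    _ ≤ η * (s + W) := by gcongr
    _ = η * s + η * W := by ring

lemma exists_maximal_prefix {wt : ℕ → ℝ≥0∞} {W R : ℝ≥0∞} {a b : ℕ}
    (hwt : ∀ t, a ≤ t → t < b → wt t ≤ W) (hWR : W ≤ R) (hS : ¬ ∑ t ∈ Ico a b, wt t ≤ R) :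
    ∃ t, a < t ∧ t < b ∧ ∑ i ∈ Ico a t, wt i ≤ R ∧ R ≤ ∑ i ∈ Ico a t, wt i + W := by
  have hex : ∃ t, ¬ ∑ i ∈ Ico a t, wt i ≤ R := ⟨b, hS⟩
  have hspec := Nat.find_spec hex
  have hmin : ∀ t < Nat.find hex, ∑ i ∈ Ico a t, wt i ≤ R := fun t ht =>
    not_not.1 (Nat.find_min hex ht)
  have hb : Nat.find hex ≤ b := Nat.find_min' hex hS
  generalize Nat.find hex = t₀ at hspec hmin hb
  have hgt : a + 1 < t₀ := by
    by_contra! h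
    refine hspec ?_
    rcases Nat.le_succ_iff.1 h with h | h
    · simp [Ico_eq_empty_of_le h]
    · rw [h, Nat.Ico_succ_singleton, sum_singleton]
      exact (hwt a le_rfl (by omega)).trans hWR
  refine ⟨t₀ - 1, by omega, by omega, hmin _ (by omega), ?_⟩
  rw [show t₀ = t₀ - 1 + 1 by omega, sum_Ico_succ_top (by omega)] at hspec
  exact (not_le.1 hspec).le.trans (add_le_add_right (hwt (t₀ - 1) (by omega) (by omega)) _)

variable (dH : V → V → ℝ≥0∞) (κ : ℕ → V → ℝ≥0∞) (z : ℕ → V) (wt : ℕ → ℝ≥0∞)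

def Reach (c e : ℝ≥0∞) (a b : ℕ) : Prop :=
  dH (z a) (z b) ≤ c * ∑ t ∈ Ico a b, wt t + e

def Anchored (l : ℕ) (c e g : ℝ≥0∞) (a b : ℕ) : Prop :=
  ∃ p q, a ≤ p ∧ p ≤ q ∧ q ≤ b ∧ κ l (z p) ≤ g ∧ κ l (z q) ≤ g ∧
    Reach dH z wt c e a p ∧ Reach dH z wt c e q b

/-- The invariant of the induction on levels. -/
def Dichotomy (l : ℕ) (c e f : ℝ≥0∞) (m : ℕ) : Prop :=
  ∀ a b, a ≤ b → b ≤ m → Reach dH z wt c e a b ∨ Anchored dH κ z wt l c f f a b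

variable {dH κ z wt} {d : V → V → ℝ≥0∞} {K l m a b : ℕ} {c c' e e' f g R : ℝ≥0∞}

lemma reach_self (hdH : IsPseudoEDist dH) (a : ℕ) : Reach dH z wt c e a a := by
  simp [Reach, hdH.self_eq_zero]

lemma Reach.mono (h : Reach dH z wt c e a b) (hc : c ≤ c') (he : e ≤ e') :
    Reach dH z wt c' e' a b :=
  le_trans h (by gcongr)

lemma Reach.trans (hdH : IsPseudoEDist dH) {b' : ℕ} (h₁ : Reach dH z wt c e a b)
    (h₂ : Reach dH z wt c e' b b') (hab : a ≤ b) (hbb' : b ≤ b') :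
    Reach dH z wt c (e + e') a b' := by
  unfold Reach at *
  calc dH (z a) (z b') ≤ dH (z a) (z b) + dH (z b) (z b') := hdH.triangle _ _ _
    _ ≤ c * ∑ t ∈ Ico a b, wt t + e + (c * ∑ t ∈ Ico b b', wt t + e') := add_le_add h₁ h₂
    _ = c * ∑ t ∈ Ico a b', wt t + (e + e') := by
      rw [← sum_Ico_consecutive _ hab hbb']
      ring

lemma Reach.charge (h : Reach dH z wt c e a b) {η : ℝ≥0∞} (he : e ≤ η * ∑ t ∈ Ico a b, wt t) :
    Reach dH z wt (c + η) 0 a b :=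
  le_trans h (by rw [add_zero, add_mul]; gcongr)

lemma reach_of_jump {p q : ℕ} (hc : 1 ≤ c)
    (hjump : dH (z p) (z q) ≤ d (z p) (z q) + 2 * κ l (z p) + 2 * κ l (z q))
    (hchain : d (z p) (z q) ≤ ∑ t ∈ Ico p q, wt t) (hp : κ l (z p) ≤ g) (hq : κ l (z q) ≤ g) :
    Reach dH z wt c (4 * g) p q :=
  calc dH (z p) (z q) ≤ d (z p) (z q) + 2 * κ l (z p) + 2 * κ l (z q) := hjump
    _ ≤ 1 * ∑ t ∈ Ico p q, wt t + 2 * g + 2 * g := by rw [one_mul]; gcongr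
    _ ≤ c * ∑ t ∈ Ico p q, wt t + 4 * g := by
      rw [add_assoc, ← add_mul, show (2 : ℝ≥0∞) + 2 = 4 by norm_num]; gcongr

lemma segment_step (hκ : IsClimbCost d dH κ K) (hd : IsPseudoEDist d) (hdH : IsPseudoEDist dH)
    (hchain : ∀ p q, p ≤ q → q ≤ m → d (z p) (z q) ≤ ∑ t ∈ Ico p q, wt t)
    (hl : l < K) (hc : 1 ≤ c) (hD : Dichotomy dH κ z wt l c e f m) (he : e ≤ 6 * f)
    (hab : a ≤ b) (hb : b ≤ m) (hR : ∑ t ∈ Ico a b, wt t ≤ R) :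
    Reach dH z wt c (6 * f) a b ∨ Anchored dH κ z wt (l + 1) c f (5 * f + 2 * R) a b := by
  rcases hD a b hab hb with h | ⟨p, q, hap, hpq, hqb, hp, hq, hap', hqb'⟩
  · exact .inl (h.mono le_rfl he)
  have hdpq : d (z p) (z q) ≤ R :=
    (hchain p q hpq (hqb.trans hb)).trans
      ((sum_le_sum_of_subset (Ico_subset_Ico hap hqb)).trans hR)
  rcases hκ.jump_or_climb₂ hd hdH hl (z p) (z q) with hj | ⟨hcp, hcq⟩
  · left
    have := ((hap'.trans hdH (reach_of_jump hc hj (hchain p q hpq (hqb.trans hb)) hp hq) hap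
      hpq).trans hdH hqb' (hap.trans hpq) hqb)
    exact this.mono le_rfl (le_of_eq (by ring))
  · refine .inr ⟨p, q, hap, hpq, hqb, hcp.trans ?_, hcq.trans ?_, hap', hqb'⟩ <;>
    · calc _ ≤ 3 * f + 2 * f + 2 * R := by gcongr
        _ = 5 * f + 2 * R := by ring

lemma reach_or_anchored_append (hdH : IsPseudoEDist dH) {t : ℕ} (hat : a ≤ t) (htb : t ≤ b)
    (hc : c ≤ c') (hfg : f + e ≤ g)
    (h₁ : Reach dH z wt c' 0 a t ∨ Anchored dH κ z wt l c f g a t)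
    (h₂ : Reach dH z wt c' e t b ∨ Anchored dH κ z wt l c' g g t b) :
    Reach dH z wt c' e a b ∨ Anchored dH κ z wt l c' g g a b := by
  have hf : f ≤ g := le_self_add.trans hfg
  rcases h₁ with h₁ | ⟨p, q, hap, hpq, hqt, hp, hq, hap', hqt'⟩ <;>
    rcases h₂ with h₂ | ⟨p', q', htp, hpq', hqb, hp', hq', htp', hqb'⟩
  · exact .inl (by simpa using h₁.trans hdH h₂ hat htb)
  · exact .inr ⟨p', q', hat.trans htp, hpq', hqb, hp', hq',
      by simpa using h₁.trans hdH htp' hat htp, hqb'⟩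
  · exact .inr ⟨p, q, hap, hpq, hqt.trans htb, hp, hq, hap'.mono hc hf,
      ((hqt'.mono hc le_rfl).trans hdH h₂ hqt htb).mono le_rfl hfg⟩
  · exact .inr ⟨p, q', hap, hpq.trans (hqt.trans (htp.trans hpq')), hqb, hp, hq',
      hap'.mono hc hf, hqb'⟩

lemma dichotomy_succ (hκ : IsClimbCost d dH κ K) (hd : IsPseudoEDist d)
    (hdH : IsPseudoEDist dH)
    (hchain : ∀ p q, p ≤ q → q ≤ m → d (z p) (z q) ≤ ∑ t ∈ Ico p q, wt t)
    {W η : ℝ≥0∞} {ρ : ℕ} (hwt : ∀ t < m, wt t ≤ W) (hW : W ≠ ⊤) (hη : η ≠ ⊤) (hρ : 1 ≤ ρ)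
    (hcharge : 6 * (budget ρ l : ℝ≥0∞) + η ≤ η * ρ ^ l) (hl : l < K)
    (hD : Dichotomy dH κ z wt l (1 + l * η) e (budget ρ l * W) m)
    (he : e ≤ 6 * (budget ρ l * W)) :
    Dichotomy dH κ z wt (l + 1) (1 + (l + 1 : ℕ) * η) (6 * (budget ρ l * W))
      (budget ρ (l + 1) * W) m := by
  set f := (budget ρ l : ℝ≥0∞) * W
  have hc : 1 + (l : ℝ≥0∞) * η + η = 1 + (l + 1 : ℕ) * η := by push_cast; ring
  have hstep : 5 * f + 2 * (ρ ^ l * W) ≤ budget ρ (l + 1) * W := by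
    rw [budget_succ_mul]; gcongr; norm_num
  have hfg : f + 6 * f ≤ budget ρ (l + 1) * W := by
    rw [budget_succ_mul, show f + 6 * f = 7 * f by ring]; exact le_self_add
  intro a b hab hbm
  induction hn : b - a using Nat.strong_induction_on generalizing a with
  | _ n ih =>
    by_cases hS : ∑ t ∈ Ico a b, wt t ≤ ρ ^ l * W
    · rcases segment_step hκ hd hdH hchain hl le_self_add hD he hab hbm hS with h | h
      · exact .inl (h.mono (hc ▸ le_self_add) le_rfl)
      · obtain ⟨p, q, hap, hpq, hqb, hp, hq, hap', hqb'⟩ := h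
        exact .inr ⟨p, q, hap, hpq, hqb, hp.trans hstep, hq.trans hstep,
          hap'.mono (hc ▸ le_self_add) (le_self_add.trans hfg),
          hqb'.mono (hc ▸ le_self_add) (le_self_add.trans hfg)⟩
    obtain ⟨t, hat, htb, hSt, hRt⟩ := exists_maximal_prefix (fun t _ ht => hwt t (by omega))
      (le_mul_of_one_le_left bot_le (one_le_pow₀ (by exact_mod_cast hρ))) hS
    have hpaid : 6 * f ≤ η * ∑ i ∈ Ico a t, wt i := by
      simpa only [f, mul_assoc] using mul_le_of_add_le_mul hcharge hRt hη hW
    have hfirst :=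
      segment_step hκ hd hdH hchain hl le_self_add hD he hat.le (htb.le.trans hbm) hSt
    refine reach_or_anchored_append hdH hat.le htb.le (hc ▸ le_self_add) hfg ?_
      (ih (b - t) (by omega) t htb.le rfl)
    rcases hfirst with h | ⟨p, q, hap, hpq, hqt, hp, hq, hap', hqt'⟩
    · exact .inl (hc ▸ h.charge hpaid)
    · exact .inr ⟨p, q, hap, hpq, hqt, hp.trans hstep, hq.trans hstep, hap', hqt'⟩

lemma dist_le_sum_Ico (hd : IsPseudoEDist d) (hstep : ∀ t < m, d (z t) (z (t + 1)) ≤ wt t)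
    {p q : ℕ} (hpq : p ≤ q) (hq : q ≤ m) : d (z p) (z q) ≤ ∑ t ∈ Ico p q, wt t := by
  induction q, hpq using Nat.le_induction with
  | base => simp [hd.self_eq_zero]
  | succ q hpq ih =>
    rw [sum_Ico_succ_top hpq]
    exact (hd.triangle _ _ _).trans (add_le_add (ih (by omega)) (hstep q (by omega)))

theorem dist_le_of_isClimbCost (hκ : IsClimbCost d dH κ K) (hd : IsPseudoEDist d)
    (hdH : IsPseudoEDist dH) (hstep : ∀ t < m, d (z t) (z (t + 1)) ≤ wt t)
    {W η : ℝ≥0∞} {ρ : ℕ} (hwt : ∀ t < m, wt t ≤ W) (hW : W ≠ ⊤) (hη : η ≠ ⊤) (hρ : 1 ≤ ρ)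
    (hcharge : ∀ l, 6 * (budget ρ l : ℝ≥0∞) + η ≤ η * ρ ^ l) :
    dH (z 0) (z m) ≤ (1 + K * η) * ∑ t ∈ range m, wt t + 6 * budget ρ K * W := by
  have hchain : ∀ p q, p ≤ q → q ≤ m → d (z p) (z q) ≤ ∑ t ∈ Ico p q, wt t :=
    fun p q hpq hq => dist_le_sum_Ico hd hstep hpq hq
  have key : ∀ l ≤ K, ∃ e ≤ 6 * (budget ρ l * W),
      Dichotomy dH κ z wt l (1 + l * η) e (budget ρ l * W) m := by
    intro l
    induction l with
    | zero =>
      refine fun _ => ⟨0, bot_le, fun a b hab _ => .inr ⟨a, b, le_rfl, hab, le_rfl, ?_, ?_,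
        reach_self hdH a, reach_self hdH b⟩⟩ <;> simp [hκ.zero]
    | succ l ih =>
      intro hl
      obtain ⟨e, he, hD⟩ := ih (by omega)
      refine ⟨6 * (budget ρ l * W), by gcongr; exact budget_mono ρ l, ?_⟩
      exact dichotomy_succ hκ hd hdH hchain hwt hW hη hρ (hcharge l) hl hD he
  obtain ⟨e, he, hD⟩ := key K le_rfl
  rw [range_eq_Ico, mul_assoc 6]
  rcases hD 0 m (Nat.zero_le m) le_rfl with h | ⟨p, q, h0p, hpq, hqm, hp, hq, h0p', hqm'⟩
  · exact h.mono le_rfl he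
  · have hjump := reach_of_jump (c := 1 + K * η) le_self_add (hκ.jump_top _ _)
      (hchain p q hpq hqm) hp hq
    exact ((h0p'.trans hdH hjump h0p hpq).trans hdH hqm' (h0p.trans hpq) hqm).mono le_rfl
      (le_of_eq (by ring))

end Stretch

section EmulatorStretch

variable [Fintype V] {d : V → V → ℝ≥0∞} {σ : ℕ → ℕ} {K l : ℕ}

lemma dist_climb_climb_le (hd : IsPseudoEDist d) (hσ : ∀ i, 1 ≤ σ i) (x y : V) :
    d (climb d σ l x) (climb d σ l y) ≤ climbCost d σ l x + d x y + climbCost d σ l y :=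
  calc d (climb d σ l x) (climb d σ l y)
      ≤ d (climb d σ l x) x + d x y + d y (climb d σ l y) :=
        (hd.triangle _ y _).trans (add_le_add_left (hd.triangle _ _ _) _)
    _ ≤ climbCost d σ l x + d x y + climbCost d σ l y := by
      rw [hd.comm _ x]
      gcongr <;> exact dist_climb_le hd hσ l _

lemma gdist_emulator_le_of_climb (hd : IsPseudoEDist d) (hσ : ∀ i, 1 ≤ σ i) (hl : l ≤ K)
    {x y : V} (h : gdist (emulator d σ K) d (climb d σ l x) (climb d σ l y) ≤
      d (climb d σ l x) (climb d σ l y)) :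
    gdist (emulator d σ K) d x y ≤ d x y + 2 * climbCost d σ l x + 2 * climbCost d σ l y := by
  have hH := isPseudoEDist_gdist (G := emulator d σ K) fun u v _ => hd.comm u v
  calc gdist (emulator d σ K) d x y
      ≤ gdist (emulator d σ K) d x (climb d σ l x) +
          gdist (emulator d σ K) d (climb d σ l x) (climb d σ l y) +
          gdist (emulator d σ K) d (climb d σ l y) y :=
        (hH.triangle _ (climb d σ l y) _).trans (add_le_add_left (hH.triangle _ _ _) _)
    _ ≤ climbCost d σ l x + (climbCost d σ l x + d x y + climbCost d σ l y) +
          climbCost d σ l y := by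
      rw [hH.comm _ y]
      gcongr
      · exact gdist_climb_le hd hσ hl x
      · exact h.trans (dist_climb_climb_le hd hσ x y)
      · exact gdist_climb_le hd hσ hl y
    _ = d x y + 2 * climbCost d σ l x + 2 * climbCost d σ l y := by ring

theorem isClimbCost_climbCost (hd : IsPseudoEDist d) (hσ : ∀ i, 1 ≤ σ i) :
    IsClimbCost d (gdist (emulator d σ K) d) (climbCost d σ) K where
  zero _ := rfl
  jump_or_climb l hl x y := by
    by_cases hv : climb d σ l y ∈ nearest d (level d σ l) (σ l) (climb d σ l x)
    · exact .inl (gdist_emulator_le_of_climb hd hσ hl.le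
        (gdist_emulator_le_of_mem (nearest_edge_mem hl (climb_mem_level l x) hv)))
    · right
      have hrad := (nearRadius_le (climb_mem_level l y) hv).trans (dist_climb_climb_le hd hσ x y)
      calc climbCost d σ (l + 1) x
          ≤ climbCost d σ l x + 2 * (climbCost d σ l x + d x y + climbCost d σ l y) := by
            simp only [climbCost]; gcongr
        _ = 3 * climbCost d σ l x + 2 * climbCost d σ l y + 2 * d x y := by ring
  jump_top x y := gdist_emulator_le_of_climb hd hσ le_rfl
    (gdist_emulator_le_of_mem (top_edge_mem (climb_mem_level K x) (climb_mem_level K y)))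

end EmulatorStretch

section Count

lemma card_sym2_le_mul (A : Finset V) : #A.sym2 ≤ #A * #A := by
  rw [card_sym2, Nat.choose_two_right, Nat.add_sub_cancel]
  exact Nat.div_le_of_le_mul (by nlinarith)

variable [Fintype V] {d : V → V → ℝ≥0∞} {σ : ℕ → ℕ} {K : ℕ}

lemma card_emulatorEdges_le :
    #(emulatorEdges d σ K) ≤ ∑ i ∈ range K, #(level d σ i) * (min (σ i) #(level d σ i) + 1) +
      #(level d σ K) * #(level d σ K) := by
  refine (card_union_le _ _).trans (add_le_add ?_ (card_sym2_le_mul _))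
  refine card_biUnion_le.trans (sum_le_sum fun i _ => card_biUnion_le.trans ?_)
  rw [← smul_eq_mul, ← sum_const]
  refine sum_le_sum fun u _ => (card_insert_le _ _).trans ?_
  rw [← card_nearest (d := d) (u := u)]
  exact Nat.add_le_add_right card_image_le 1

/-- The second alternative occurs once some level has fewer than `σ i` points. -/
lemma card_level_mul_prod_le_or_le_one (i : ℕ) :
    #(level d σ i) * ∏ j ∈ range i, σ j ≤ Fintype.card V ∨ #(level d σ i) ≤ 1 := by
  induction i with
  | zero => simpa using .inl (card_le_univ _)
  | succ i ih =>
    have hsub : #(level d σ (i + 1)) ≤ #(level d σ i) := card_le_card (level_succ_subset i)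
    have hmul : #(level d σ (i + 1)) * min (σ i) #(level d σ i) ≤ #(level d σ i) :=
      card_image_center_mul_le
    rcases ih with ih | ih
    · by_cases hσ : σ i ≤ #(level d σ i)
      · left
        rw [min_eq_left hσ] at hmul
        calc #(level d σ (i + 1)) * ∏ j ∈ range (i + 1), σ j
            = #(level d σ (i + 1)) * σ i * ∏ j ∈ range i, σ j := by rw [prod_range_succ]; ring
          _ ≤ #(level d σ i) * ∏ j ∈ range i, σ j := Nat.mul_le_mul_right _ hmul
          _ ≤ _ := ih
      · right
        rw [min_eq_right (not_le.1 hσ).le] at hmul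
        rcases Nat.eq_zero_or_pos #(level d σ i) with h | h
        · omega
        · exact Nat.le_of_mul_le_mul_right (by simpa using hmul) h
    · exact .inr (hsub.trans ih)

/-- The factor `2` makes the edge counts of the successive levels decay geometrically. -/
noncomputable def levelSize (x : ℝ) (i : ℕ) : ℕ := ⌈2 * x ^ 2 ^ i⌉₊

variable {x : ℝ}

lemma one_le_levelSize (hx : 1 ≤ x) (i : ℕ) : 1 ≤ levelSize x i :=
  Nat.one_le_iff_ne_zero.2 fun h => by
    have := (Nat.ceil_eq_zero.1 h).trans_lt' (by positivity : 0 < 2 * x ^ 2 ^ i)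
    simp at this

lemma levelSize_add_one_le (hx : 1 ≤ x) (i : ℕ) : (levelSize x i : ℝ) + 1 ≤ 4 * x ^ 2 ^ i := by
  have h1 : 1 ≤ x ^ 2 ^ i := one_le_pow₀ hx
  have := Nat.ceil_lt_add_one (by positivity : 0 ≤ 2 * x ^ 2 ^ i)
  rw [levelSize]
  linarith

lemma pow_le_prod_levelSize_mul (hx : 0 ≤ x) (i : ℕ) :
    2 ^ i * x ^ 2 ^ i ≤ (∏ j ∈ range i, (levelSize x j : ℝ)) * x := by
  induction i with
  | zero => simp
  | succ i ih =>
    have hsq : x ^ 2 ^ (i + 1) = (x ^ 2 ^ i) ^ 2 := by rw [pow_succ, pow_mul]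
    calc (2 : ℝ) ^ (i + 1) * x ^ 2 ^ (i + 1) = 2 ^ i * x ^ 2 ^ i * (2 * x ^ 2 ^ i) := by
          rw [hsq]; ring
      _ ≤ (∏ j ∈ range i, (levelSize x j : ℝ)) * x * levelSize x i :=
          mul_le_mul ih (Nat.le_ceil _) (by positivity) (by positivity)
      _ = (∏ j ∈ range (i + 1), (levelSize x j : ℝ)) * x := by rw [prod_range_succ]; ring

variable {c n i : ℕ}

lemma mul_pow_le_of_mul_prod_le (hx : 0 ≤ x) (hc : c * ∏ j ∈ range i, levelSize x j ≤ n) :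
    c * (2 ^ i * x ^ 2 ^ i) ≤ n * x := by
  calc c * (2 ^ i * x ^ 2 ^ i) ≤ c * ((∏ j ∈ range i, (levelSize x j : ℝ)) * x) :=
        mul_le_mul_of_nonneg_left (pow_le_prod_levelSize_mul hx i) c.cast_nonneg
    _ = ((c * ∏ j ∈ range i, levelSize x j : ℕ) : ℝ) * x := by push_cast; ring
    _ ≤ n * x := mul_le_mul_of_nonneg_right (by exact_mod_cast hc) hx

lemma level_term_le (hx : 1 ≤ x)
    (hc : c * ∏ j ∈ range i, levelSize x j ≤ n ∨ c ≤ 1) :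
    (c * (min (levelSize x i) c + 1) : ℕ) ≤ 4 * (1 / 2) ^ i * (n * x) + 2 := by
  rcases hc with hc | hc
  · have hmain := mul_pow_le_of_mul_prod_le (by linarith) hc
    calc ((c * (min (levelSize x i) c + 1) : ℕ) : ℝ) ≤ c * ((levelSize x i : ℝ) + 1) := by
          push_cast; gcongr; exact_mod_cast min_le_left _ _
      _ ≤ c * (4 * x ^ 2 ^ i) := by gcongr; exact levelSize_add_one_le hx i
      _ = 4 * (1 / 2) ^ i * (c * (2 ^ i * x ^ 2 ^ i)) := by
          rw [one_div, inv_pow]; field_simp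
      _ ≤ 4 * (1 / 2) ^ i * (n * x) + 2 := le_add_of_le_of_nonneg (by gcongr) zero_le_two
  · have h2 : c * (min (levelSize x i) c + 1) ≤ 2 := by
      interval_cases c <;> simp
    have : (0 : ℝ) ≤ 4 * (1 / 2) ^ i * (n * x) :=
      mul_nonneg (by positivity) (mul_nonneg n.cast_nonneg (by linarith))
    calc ((c * (min (levelSize x i) c + 1) : ℕ) : ℝ) ≤ 2 := by exact_mod_cast h2
      _ ≤ _ := le_add_of_nonneg_left this

lemma top_term_le (hx : 1 ≤ x) (hn : n * x = x ^ 2 ^ (K + 1))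
    (hc : c * ∏ j ∈ range K, levelSize x j ≤ n ∨ c ≤ 1) : ((c * c : ℕ) : ℝ) ≤ n * x := by
  have hpos : 0 < x ^ 2 ^ K := by positivity
  have hsq : n * x = x ^ 2 ^ K * x ^ 2 ^ K := by rw [hn, pow_succ, pow_mul, sq]
  rcases hc with hc | hc
  · have hmain := mul_pow_le_of_mul_prod_le (by linarith) hc
    have hcx : (c : ℝ) ≤ x ^ 2 ^ K := by
      refine le_of_mul_le_mul_right ?_ hpos
      calc (c : ℝ) * x ^ 2 ^ K ≤ c * (2 ^ K * x ^ 2 ^ K) := by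
            gcongr; exact le_mul_of_one_le_left hpos.le (one_le_pow₀ one_le_two)
        _ ≤ _ := hmain.trans_eq hsq
    push_cast
    rw [hsq]
    exact mul_le_mul hcx hcx c.cast_nonneg hpos.le
  · have h1 : c * c ≤ 1 := Nat.mul_le_mul hc hc
    calc ((c * c : ℕ) : ℝ) ≤ 1 := by exact_mod_cast h1
      _ ≤ n * x := by rw [hn]; exact one_le_pow₀ hx

theorem card_emulatorEdges_levelSize_le (hx : 1 ≤ x)
    (hn : Fintype.card V * x = x ^ 2 ^ (K + 1)) :
    (#(emulatorEdges d (levelSize x) K) : ℝ) ≤ 9 * (Fintype.card V * x) + 2 * K := by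
  set N := (Fintype.card V : ℝ) * x
  have hlevels : ∑ i ∈ range K, ((#(level d (levelSize x) i) *
      (min (levelSize x i) #(level d (levelSize x) i) + 1) : ℕ) : ℝ) ≤ 8 * N + 2 * K :=
    calc _ ≤ ∑ i ∈ range K, (4 * (1 / 2) ^ i * N + 2) :=
          sum_le_sum fun i _ => level_term_le hx (card_level_mul_prod_le_or_le_one i)
      _ = 4 * N * ∑ i ∈ range K, (1 / 2 : ℝ) ^ i + 2 * K := by
          rw [sum_add_distrib, mul_sum]; simp [mul_comm, mul_left_comm]
      _ ≤ 4 * N * 2 + 2 * K := by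
          gcongr
          exact sum_geometric_two_le K
      _ = 8 * N + 2 * K := by ring
  have htop := top_term_le hx hn (card_level_mul_prod_le_or_le_one (d := d) K)
  calc (#(emulatorEdges d (levelSize x) K) : ℝ)
      ≤ ((∑ i ∈ range K, #(level d (levelSize x) i) *
          (min (levelSize x i) #(level d (levelSize x) i) + 1) +
          #(level d (levelSize x) K) * #(level d (levelSize x) K) : ℕ) : ℝ) := by
        exact_mod_cast card_emulatorEdges_le
    _ ≤ 8 * N + 2 * K + N := by push_cast at hlevels htop ⊢; exact add_le_add hlevels htop
    _ = 9 * N + 2 * K := by ring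

end Count

section Parameters

lemma budget_charge {η : ℝ} (hη : 0 < η) {ρ : ℕ} (hρ : 7 + 12 / η ≤ ρ) (l : ℕ) :
    6 * (budget ρ l : ℝ) + η ≤ η * ρ ^ l := by
  induction l with
  | zero => simp [budget]
  | succ l ih =>
    have hρη : 7 * η + 12 ≤ η * ρ := by
      have := mul_le_mul_of_nonneg_left hρ hη.le
      rwa [mul_add, mul_div_cancel₀ _ hη.ne', mul_comm η 7] at this
    have hpow : (0 : ℝ) ≤ ρ ^ l := by positivity
    simp only [budget, Nat.cast_add, Nat.cast_mul, Nat.cast_pow, Nat.cast_ofNat, pow_succ]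
    nlinarith [mul_le_mul_of_nonneg_right hρη hpow]

lemma budget_charge_ofReal {η : ℝ} (hη : 0 < η) {ρ : ℕ} (hρ : 7 + 12 / η ≤ ρ) (l : ℕ) :
    6 * (budget ρ l : ℝ≥0∞) + ENNReal.ofReal η ≤ ENNReal.ofReal η * ρ ^ l := by
  have h := ENNReal.ofReal_le_ofReal (budget_charge hη hρ l)
  rwa [ENNReal.ofReal_add (by positivity) hη.le, ENNReal.ofReal_mul (by norm_num),
    ENNReal.ofReal_mul hη.le, ENNReal.ofReal_pow (Nat.cast_nonneg _), ENNReal.ofReal_natCast,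
    ENNReal.ofReal_natCast, ENNReal.ofReal_ofNat] at h

lemma six_budget_le {ε : ℝ} (hε0 : 0 < ε) (hε1 : ε < 1) {K : ℕ} (hK : 1 ≤ K) :
    6 * (budget ⌈7 + 12 / (ε / K)⌉₊ K : ℝ) ≤ (20 * (K + 1 : ℕ) / ε) ^ K := by
  have hKpos : (0 : ℝ) < K := by exact_mod_cast hK
  have hη : 0 < ε / K := div_pos hε0 hKpos
  have hη1 : ε / K ≤ 1 := (div_le_one hKpos).2 (hε1.le.trans (by exact_mod_cast hK))
  set ρ := ⌈7 + 12 / (ε / K)⌉₊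
  have hρ : (ρ : ℝ) ≤ 20 * (K + 1 : ℕ) / ε := by
    have h1 : (ρ : ℝ) * ε < (7 + 12 / (ε / K) + 1) * ε :=
      mul_lt_mul_of_pos_right (Nat.ceil_lt_add_one (by positivity)) hε0
    have h2 : (7 + 12 / (ε / K) + 1) * ε = 8 * ε + 12 * K := by field_simp; ring
    rw [le_div_iff₀ hε0]
    push_cast
    linarith
  have hcharge := budget_charge (ρ := ρ) hη (Nat.le_ceil _) K
  calc 6 * (budget ρ K : ℝ) ≤ ε / K * ρ ^ K := by linarith
    _ ≤ 1 * ρ ^ K := by gcongr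
    _ ≤ _ := by rw [one_mul]; gcongr

end Parameters

section Main

variable [Fintype V]

theorem gdist_emulator_le {G : SimpleGraph V} {w : V → V → ℝ≥0∞}
    (hsym : ∀ u v, G.Adj u v → w u v = w v u) (hfin : ∀ u v, G.Adj u v → w u v ≠ ⊤)
    {σ : ℕ → ℕ} (hσ : ∀ i, 1 ≤ σ i) {K : ℕ} (hK : 1 ≤ K) {x y : V} (P : G.Walk x y)
    {ε : ℝ} (hε0 : 0 < ε) (hε1 : ε < 1) :
    gdist (emulator (gdist G w) σ K) (gdist G w) x y ≤
      ENNReal.ofReal (1 + ε) * wWeight w P +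
        ENNReal.ofReal ((20 * (K + 1 : ℕ) / ε) ^ K) * maxW w P := by
  have hd := isPseudoEDist_gdist hsym
  have hKpos : (0 : ℝ) < K := by exact_mod_cast hK
  set η := ε / K
  have hη : 0 < η := div_pos hε0 hKpos
  set ρ := ⌈7 + 12 / η⌉₊
  have hρ : 7 + 12 / η ≤ ρ := Nat.le_ceil _
  have h := dist_le_of_isClimbCost (isClimbCost_climbCost (K := K) hd hσ) hd
    (isPseudoEDist_gdist fun u v _ => hd.comm u v) (z := P.getVert) (m := P.length)
    (fun t ht => gdist_le_of_adj (P.adj_getVert_succ ht)) (fun t ht => le_maxW P ht)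
    (maxW_ne_top hfin P) ENNReal.ofReal_ne_top
    (Nat.one_le_iff_ne_zero.2 (by positivity)) (budget_charge_ofReal hη hρ)
  rw [P.getVert_zero, P.getVert_length, ← wWeight_eq_sum_getVert] at h
  refine h.trans ?_
  gcongr ?_ * _ + ?_ * _
  · rw [← ENNReal.ofReal_natCast, ← ENNReal.ofReal_mul K.cast_nonneg, mul_div_cancel₀ _ hKpos.ne',
      ENNReal.ofReal_add zero_le_one hε0.le, ENNReal.ofReal_one]
  · rw [← ENNReal.ofReal_ofNat, ← ENNReal.ofReal_natCast, ← ENNReal.ofReal_mul (by norm_num)]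
    exact ENNReal.ofReal_le_ofReal (six_budget_le hε0 hε1 hK)

lemma ncard_edgeSet_emulator_le (d : V → V → ℝ≥0∞) (σ : ℕ → ℕ) (K : ℕ) :
    (emulator d σ K).edgeSet.ncard ≤ #(emulatorEdges d σ K) := by
  rw [← Set.ncard_coe_finset]
  exact Set.ncard_le_ncard (by rw [emulator, SimpleGraph.edgeSet_fromEdgeSet]; exact Set.sdiff_subset)

noncomputable def growthBase (n k : ℕ) : ℝ := (n : ℝ) ^ (1 / ((2 : ℝ) ^ k - 1))

lemma one_le_growthBase {n : ℕ} (hn : 1 ≤ n) (k : ℕ) : 1 ≤ growthBase n k :=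
  Real.one_le_rpow (by exact_mod_cast hn)
    (one_div_nonneg.2 (by linarith [one_le_pow₀ (M₀ := ℝ) one_le_two (n := k)]))

lemma mul_growthBase_eq_pow (n : ℕ) {k : ℕ} (hk : 1 ≤ k) :
    n * growthBase n k = growthBase n k ^ 2 ^ k := by
  have h2k : 1 ≤ 2 ^ k := Nat.one_le_two_pow
  have hM : (0 : ℝ) < 2 ^ k - 1 := by
    have : (2 : ℝ) ≤ 2 ^ k := by exact_mod_cast Nat.le_self_pow (by omega) 2
    linarith
  have hpow : growthBase n k ^ (2 ^ k - 1) = n := by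
    rw [growthBase, ← Real.rpow_mul_natCast n.cast_nonneg, Nat.cast_sub h2k]
    push_cast
    rw [one_div_mul_cancel hM.ne', Real.rpow_one]
  rw [← Nat.sub_add_cancel h2k, pow_succ, hpow]

theorem ncard_edgeSet_emulator_levelSize_le (d : V → V → ℝ≥0∞) {K : ℕ}
    (hn : 1 ≤ Fintype.card V) :
    ((emulator d (levelSize (growthBase (Fintype.card V) (K + 1))) K).edgeSet.ncard : ℝ) ≤
      20 * ((K + 1 : ℕ) * (Fintype.card V : ℝ) +
        (Fintype.card V : ℝ) ^ ((1 : ℝ) + 1 / (2 ^ (K + 1) - 1))) := by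
  have hn' : (1 : ℝ) ≤ Fintype.card V := by exact_mod_cast hn
  have hcard := card_emulatorEdges_levelSize_le (d := d) (one_le_growthBase hn (K + 1))
    (mul_growthBase_eq_pow _ (by omega))
  have hN : (Fintype.card V : ℝ) * growthBase (Fintype.card V) (K + 1) =
      (Fintype.card V : ℝ) ^ ((1 : ℝ) + 1 / (2 ^ (K + 1) - 1)) := by
    rw [growthBase, Real.rpow_add (by linarith), Real.rpow_one]
  rw [hN] at hcard
  calc ((emulator d (levelSize (growthBase (Fintype.card V) (K + 1))) K).edgeSet.ncard : ℝ)
      ≤ #(emulatorEdges d (levelSize (growthBase (Fintype.card V) (K + 1))) K) := by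
        exact_mod_cast ncard_edgeSet_emulator_le _ _ _
    _ ≤ _ := hcard
    _ ≤ _ := by
        push_cast
        nlinarith [Real.rpow_nonneg (by linarith : (0 : ℝ) ≤ Fintype.card V)
          ((1 : ℝ) + 1 / (2 ^ (K + 1) - 1))]

end Main

/-- Theorem 3.3 + Remark 3.4: there is an absolute constant `C` such that every
weighted connected graph on `n` vertices admits, for every integer `k > 1`, a weighted graph `H`
with at most `C(kn + n^{1+1/(2^k-1)})` edges, with `d_H ≥ d_G`, such that for every `0 < ε < 1`
and every path `P` in `G` from `x` to `y`, `d_H(x,y) ≤ (1+ε)·w(P) + β·W(P)` where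
`β = (Ck/ε)^{k-1}`. -/
theorem statement3 :
    ∃ C : ℝ, 0 < C ∧
      ∀ (V : Type) [Fintype V] (G : SimpleGraph V), G.Connected →
        ∀ w : V → V → ℝ≥0∞, (∀ u v, G.Adj u v → w u v = w v u) →
          (∀ u v, G.Adj u v → w u v ≠ ⊤) →
          ∀ k : ℕ, 1 < k →
            ∃ (H : SimpleGraph V) (wH : V → V → ℝ≥0∞),
              (∀ u v, H.Adj u v → wH u v = wH v u) ∧
              (∀ u v, H.Adj u v → wH u v ≠ ⊤) ∧
              (H.edgeSet.ncard : ℝ) ≤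
                C * (k * (Fintype.card V : ℝ) +
                  (Fintype.card V : ℝ) ^ ((1 : ℝ) + 1 / (2 ^ k - 1))) ∧
              (∀ x y : V, gdist G w x y ≤ gdist H wH x y) ∧
              ∀ (x y : V) (P : G.Walk x y), P.IsPath →
                ∀ ε : ℝ, 0 < ε → ε < 1 →
                  gdist H wH x y ≤ ENNReal.ofReal (1 + ε) * wWeight w P +
                    ENNReal.ofReal ((C * k / ε) ^ (k - 1)) * maxW w P := by
  refine ⟨20, by norm_num, fun V _ G hconn w hsym hfin k hk => ?_⟩
  obtain ⟨K, rfl⟩ : ∃ K, k = K + 1 := ⟨k - 1, by omega⟩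
  have hd := isPseudoEDist_gdist hsym
  have hn : 1 ≤ Fintype.card V := by
    have := hconn.nonempty
    exact Fintype.card_pos
  refine ⟨emulator (gdist G w) (levelSize (growthBase (Fintype.card V) (K + 1))) K, gdist G w,
    fun u v _ => hd.comm u v, fun u v _ => gdist_ne_top hconn hfin,
    ncard_edgeSet_emulator_levelSize_le _ hn, fun x y => hd.le_gdist, fun x y P _ ε hε0 hε1 => ?_⟩
  simpa using
    gdist_emulator_le hsym hfin (one_le_levelSize (one_le_growthBase hn _)) (by omega) P hε0 hε1

end ASP
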